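/- arXiv:1404.3996 — 3 statements merged into one kernel-verified Lean document; each statement's English description precedes it below -/
import Mathlib

section
/- The function v ↦ eb(v) is strictly increasing on (0, ∞). -/
/-!
`eb v` is the larger root of `q_v(x) = v x² - (R v - α - β) x - β R
= v x (x - R) + ((α + β) x - β R)`. A positive root `e` of `q_u` lies below `R`, so for
`u < v` we get `q_v(e) = q_u(e) + (v - u) e (e - R) < 0`: `e = eb u` lies strictly between
the roots of `q_v`, hence below its larger root `eb v`.
-/

noncomputable def quadraticLargerRoot (a b c : ℝ) : ℝ :=
  (b + √(b ^ 2 + 4 * a * c)) / (2 * a)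

theorem quadraticLargerRoot_isRoot {a b c : ℝ} (ha : a ≠ 0) (hD : 0 ≤ b ^ 2 + 4 * a * c) :
    a * quadraticLargerRoot a b c ^ 2 - b * quadraticLargerRoot a b c - c = 0 := by
  have hsq := Real.sq_sqrt hD
  unfold quadraticLargerRoot
  generalize √(b ^ 2 + 4 * a * c) = s at hsq ⊢
  have hexpand : a * ((b + s) / (2 * a)) ^ 2 - b * ((b + s) / (2 * a)) - c =
      (s ^ 2 - (b ^ 2 + 4 * a * c)) / (4 * a) := by
    field_simp
    ring
  rw [hexpand, hsq, sub_self, zero_div]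

theorem lt_quadraticLargerRoot_of_neg {a b c y : ℝ} (ha : 0 < a)
    (hy : a * y ^ 2 - b * y - c < 0) : y < quadraticLargerRoot a b c := by
  have hsq : (2 * a * y - b) ^ 2 < b ^ 2 + 4 * a * c := by nlinarith
  have hlt : 2 * a * y - b < √(b ^ 2 + 4 * a * c) := Real.lt_sqrt_of_sq_lt hsq
  rw [quadraticLargerRoot, lt_div_iff₀ (by positivity)]
  linarith

theorem onOff_quadratic_eq (R α β v x : ℝ) :
    v * x ^ 2 - (R * v - α - β) * x - β * R = v * x * (x - R) + ((α + β) * x - β * R) := by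
  ring

theorem onOff_root_lt_peak {R α β v x : ℝ} (hα : 0 < α) (hβ : 0 < β) (hv : 0 < v)
    (hx : 0 < x) (hroot : v * x ^ 2 - (R * v - α - β) * x - β * R = 0) : x < R := by
  by_contra! hRx
  have hgrowth : 0 ≤ v * x * (x - R) := mul_nonneg (by positivity) (by linarith)
  nlinarith [onOff_quadratic_eq R α β v x]

theorem effective_bandwidth_eq_quadraticLargerRoot (R α β v : ℝ) :
    (R * v - α - β + Real.sqrt ((R * v - α - β) ^ 2 + 4 * β * R * v)) / (2 * v) =
      quadraticLargerRoot v (R * v - α - β) (β * R) := by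
  rw [quadraticLargerRoot]
  ring_nf

/-- The effective bandwidth `eb` of a single exponential ON–OFF source is strictly
increasing on `(0, ∞)`. -/
theorem effective_bandwidth_strictMonoOn
    (R α β : ℝ) (hR : 0 < R) (hα : 0 < α) (hβ : 0 < β)
    (eb : ℝ → ℝ)
    (heb : ∀ v, 0 < v → eb v =
      (R * v - α - β + Real.sqrt ((R * v - α - β) ^ 2 + 4 * β * R * v)) / (2 * v)) :
    StrictMonoOn eb (Set.Ioi 0) := by
  intro u (hu : 0 < u) v (hv : 0 < v) huv
  rw [heb u hu, heb v hv, effective_bandwidth_eq_quadraticLargerRoot,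
    effective_bandwidth_eq_quadraticLargerRoot]
  set e := quadraticLargerRoot u (R * u - α - β) (β * R)
  have hβR : 0 < β * R := mul_pos hβ hR
  have he_root : u * e ^ 2 - (R * u - α - β) * e - β * R = 0 :=
    quadraticLargerRoot_isRoot hu.ne' (by positivity)
  have he_pos : 0 < e := lt_quadraticLargerRoot_of_neg hu (by linarith)
  have he_lt : e < R := onOff_root_lt_peak hα hβ hu he_pos he_root
  apply lt_quadraticLargerRoot_of_neg hv
  have hshift : 0 < (v - u) * e * (R - e) :=
    mul_pos (mul_pos (by linarith) he_pos) (by linarith)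
  linear_combination he_root + hshift
end

section
/- Suppose N·R₂β₂/(α₂+β₂) < c. Then the set S = {v > 0 : g(v) + N·eb(v) = c} is nonempty and has a least element η > 0 (the minimum positive solution of g(η) + N·eb(η) = c exists). -/
/-!
Rationalizing, `eb v = 2 β₂ R₂ / (√((R₂ v - α₂ - β₂)² + 4 β₂ R₂ v) - (R₂ v - α₂ - β₂))`, and
this denominator is continuous with value `2 (α₂ + β₂)` at `0`; hence
`g + N eb → N R₂ β₂ / (α₂ + β₂) < c` as `v → 0⁺`. Since `eb v ≥ R₂ - (α₂ + β₂) / v`, eventually `g + N eb > c` as `v → ∞`. The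
intermediate value theorem gives a solution of `g + N eb = c`, and since the solution set avoids
some interval `(0, δ)`, it is closed in `ℝ` and therefore has a least element.
-/

open Filter Set Topology

theorem ContinuousOn.exists_isLeast_Ioi_of_eventually_lt_of_eventually_gt {f : ℝ → ℝ} {a c : ℝ}
    (hf : ContinuousOn f (Ioi a)) (hlow : ∀ᶠ v in 𝓝[>] a, f v < c)
    (hhigh : ∀ᶠ v in atTop, c < f v) :
    ∃ η, IsLeast {v | a < v ∧ f v = c} η ∧ a < η := by
  obtain ⟨δ, hδ, hδlow⟩ := mem_nhdsGT_iff_exists_Ioo_subset.mp hlow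
  obtain ⟨x, hxc, hx⟩ := (hlow.and self_mem_nhdsWithin).exists
  obtain ⟨b, hbc, hxb⟩ := (hhigh.and (eventually_ge_atTop x)).exists
  have hsub : Icc x b ⊆ Ioi a := fun v hv => lt_of_lt_of_le hx hv.1
  obtain ⟨y, hy, hyc⟩ := intermediate_value_Icc hxb (hf.mono hsub) ⟨hxc.le, hbc.le⟩
  have hS : {v | a < v ∧ f v = c} = Ici δ ∩ f ⁻¹' {c} := by
    ext v
    refine ⟨fun ⟨hav, hfv⟩ => ⟨?_, hfv⟩, fun ⟨hδv, hfv⟩ => ⟨lt_of_lt_of_le hδ hδv, hfv⟩⟩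
    by_contra hvδ
    rw [mem_Ici, not_le] at hvδ
    exact (hδlow ⟨hav, hvδ⟩ : f v < c).ne hfv
  have hclosed : IsClosed (Ici δ ∩ f ⁻¹' {c}) :=
    (hf.mono fun v hv => lt_of_lt_of_le hδ hv).preimage_isClosed_of_isClosed isClosed_Ici
      isClosed_singleton
  have hyS : y ∈ Ici δ ∩ f ⁻¹' {c} := hS ▸ ⟨hsub hy, hyc⟩
  have hleast := hclosed.isLeast_csInf ⟨y, hyS⟩ ⟨δ, fun v hv => hv.1⟩
  exact ⟨_, hS ▸ hleast, lt_of_lt_of_le hδ hleast.1.1⟩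

noncomputable def onOffEffBandwidth (R α β v : ℝ) : ℝ :=
  (R * v - α - β + √((R * v - α - β) ^ 2 + 4 * β * R * v)) / (2 * v)

section onOffEffBandwidth

variable {R α β : ℝ}

theorem continuousOn_onOffEffBandwidth : ContinuousOn (onOffEffBandwidth R α β) (Ioi 0) := by
  unfold onOffEffBandwidth
  exact ContinuousOn.div (by fun_prop) (by fun_prop) fun v hv => by simp [(mem_Ioi.mp hv).ne']

theorem sub_div_le_onOffEffBandwidth (hR : 0 ≤ R) (hβ : 0 ≤ β) {v : ℝ} (hv : 0 < v) :
    R - (α + β) / v ≤ onOffEffBandwidth R α β v := by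
  have hA : R * v - α - β ≤ √((R * v - α - β) ^ 2 + 4 * β * R * v) :=
    Real.le_sqrt_of_sq_le (le_add_of_nonneg_right (by positivity))
  calc R - (α + β) / v = (R * v - α - β + (R * v - α - β)) / (2 * v) := by
        field_simp
        ring
    _ ≤ onOffEffBandwidth R α β v := by unfold onOffEffBandwidth; gcongr

/-- Multiplying by the conjugate removes the `0 / 0` singularity at `v = 0`. -/
theorem onOffEffBandwidth_eq_div {v : ℝ} (hv : v ≠ 0) (hq : 0 ≤ (R * v - α - β) ^ 2 + 4 * β * R * v)
    (hD : √((R * v - α - β) ^ 2 + 4 * β * R * v) - (R * v - α - β) ≠ 0) :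
    onOffEffBandwidth R α β v =
      2 * β * R / (√((R * v - α - β) ^ 2 + 4 * β * R * v) - (R * v - α - β)) := by
  rw [onOffEffBandwidth, div_eq_div_iff (by simpa using hv) hD]
  linear_combination Real.sq_sqrt hq

theorem tendsto_onOffEffBandwidth_nhdsGT_zero (hR : 0 ≤ R) (hβ : 0 ≤ β) (hαβ : 0 < α + β) :
    Tendsto (onOffEffBandwidth R α β) (𝓝[>] 0) (𝓝 (R * β / (α + β))) := by
  set D : ℝ → ℝ := fun v => √((R * v - α - β) ^ 2 + 4 * β * R * v) - (R * v - α - β)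
  have hD0 : D 0 = 2 * (α + β) := by
    simp only [D]
    rw [show (R * 0 - α - β) ^ 2 + 4 * β * R * 0 = (α + β) ^ 2 by ring, Real.sqrt_sq hαβ.le]
    ring
  have hDcont : Continuous D := by fun_prop
  have hD0ne : D 0 ≠ 0 := by rw [hD0]; positivity
  have hlim : Tendsto (fun v => 2 * β * R / D v) (𝓝 0) (𝓝 (R * β / (α + β))) := by
    have hval : 2 * β * R / D 0 = R * β / (α + β) := by
      rw [hD0]
      field_simp
    exact hval ▸ tendsto_const_nhds.div (hDcont.tendsto 0) hD0ne
  refine (hlim.mono_left nhdsWithin_le_nhds).congr' ?_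
  have hDne : ∀ᶠ v in 𝓝[>] (0 : ℝ), D v ≠ 0 :=
    nhdsWithin_le_nhds (hDcont.continuousAt.eventually_ne hD0ne)
  filter_upwards [hDne, self_mem_nhdsWithin] with v hv (hv0 : 0 < v)
  exact (onOffEffBandwidth_eq_div hv0.ne' (by positivity) hv).symm

end onOffEffBandwidth

theorem exists_min_positive_solution_eta_general
    (N : ℕ) (hN : 1 ≤ N) (R₂ α₂ β₂ c : ℝ)
    (hR : 0 < R₂) (hα : 0 < α₂) (hβ : 0 < β₂)
    (eb : ℝ → ℝ)
    (heb : ∀ v, 0 < v → eb v =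
      (R₂ * v - α₂ - β₂ + Real.sqrt ((R₂ * v - α₂ - β₂) ^ 2 + 4 * β₂ * R₂ * v)) / (2 * v))
    (g : ℝ → ℝ)
    (hgcont : ContinuousOn g (Set.Ioi 0))
    (hg0 : Filter.Tendsto g (nhdsWithin 0 (Set.Ioi 0)) (nhds 0))
    (hginf : Filter.Tendsto g Filter.atTop (nhds c))
    (hstab : N * R₂ * β₂ / (α₂ + β₂) < c) :
    ({v : ℝ | 0 < v ∧ g v + N * eb v = c}).Nonempty ∧
    ∃ η, IsLeast {v : ℝ | 0 < v ∧ g v + N * eb v = c} η ∧ 0 < η := by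
  have heq : EqOn eb (onOffEffBandwidth R₂ α₂ β₂) (Ioi 0) := heb
  have hcont : ContinuousOn (fun v => g v + N * eb v) (Ioi 0) :=
    hgcont.add (continuousOn_const.mul (continuousOn_onOffEffBandwidth.congr heq))
  have hlow : ∀ᶠ v in 𝓝[>] 0, g v + N * eb v < c := by
    have heb0 := (tendsto_onOffEffBandwidth_nhdsGT_zero hR.le hβ.le (by positivity)).congr'
      (eventually_mem_nhdsWithin.mono fun v hv => (heq hv).symm)
    refine (hg0.add (heb0.const_mul (N : ℝ))).eventually_lt_const ?_
    rwa [zero_add, ← mul_div_assoc, ← mul_assoc]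
  have hhigh : ∀ᶠ v in atTop, c < g v + N * eb v := by
    have hbound : Tendsto (fun v => g v + N * (R₂ - (α₂ + β₂) / v)) atTop (𝓝 (c + N * R₂)) := by
      simpa only [sub_zero, id] using
        hginf.add ((tendsto_const_nhds.sub (tendsto_const_nhds.div_atTop tendsto_id)).const_mul _)
    have hNR : c < c + N * R₂ := by
      have : (1 : ℝ) ≤ N := by exact_mod_cast hN
      nlinarith
    filter_upwards [hbound.eventually_const_lt hNR, eventually_gt_atTop 0] with v hv hv0
    calc c < _ := hv
      _ ≤ g v + N * eb v := by
        rw [heq hv0]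
        gcongr
        exact sub_div_le_onOffEffBandwidth hR.le hβ.le hv0
  obtain ⟨η, hη, hη0⟩ := hcont.exists_isLeast_Ioi_of_eventually_lt_of_eventually_gt hlow hhigh
  exact ⟨⟨η, hη.1⟩, η, hη, hη0⟩

/-- Under the stability condition `N R₂ β₂/(α₂+β₂) < c`, the set
`S = {v > 0 : g v + N · eb v = c}` is nonempty and has a least element `η > 0`. -/
theorem exists_min_positive_solution_eta
    (N : ℕ) (hN : 1 ≤ N) (R₂ α₂ β₂ c : ℝ)
    (hR : 0 < R₂) (hα : 0 < α₂) (hβ : 0 < β₂) (hc : 0 < c)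
    (eb : ℝ → ℝ)
    (heb : ∀ v, 0 < v → eb v =
      (R₂ * v - α₂ - β₂ + Real.sqrt ((R₂ * v - α₂ - β₂) ^ 2 + 4 * β₂ * R₂ * v)) / (2 * v))
    (g : ℝ → ℝ)
    (hgcont : ContinuousOn g (Set.Ioi 0))
    (hgmono : MonotoneOn g (Set.Ioi 0))
    (hgbd : ∀ v, 0 < v → 0 ≤ g v ∧ g v ≤ c)
    (hg0 : Filter.Tendsto g (nhdsWithin 0 (Set.Ioi 0)) (nhds 0))
    (hginf : Filter.Tendsto g Filter.atTop (nhds c))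
    (hstab : N * R₂ * β₂ / (α₂ + β₂) < c) :
    ({v : ℝ | 0 < v ∧ g v + N * eb v = c}).Nonempty ∧
    ∃ η, IsLeast {v : ℝ | 0 < v ∧ g v + N * eb v = c} η ∧ 0 < η :=
  exists_min_positive_solution_eta_general N hN R₂ α₂ β₂ c hR hα hβ eb heb g hgcont hg0 hginf hstab
end

section
/- If the failure rate r(x) = G′(x)/(p − G(x)) is nondecreasing on [0,∞), then the function f(x) = (∫_x^∞ e^{θy} G′(y) dy) / (e^{θx}·(p − G(x))) is nonincreasing on [0,∞); if r is nonincreasing, then f is nondecreasing. Consequently, in the increasing-failure-rate case sup_x f(x) = f(0) and in the decreasing-failure-rate case inf_x f(x) = f(0). -/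
/-!
Write `S = p - G` and `f = expTailRatio p θ G G'`. Integrating by parts,
`∫ₓ^∞ e^{θy} G'(y) dy = e^{θx} S(x) + θ ∫ₓ^∞ e^{θy} S(y) dy`, and the shift `y = x + t`
turns this into `f(x) = 1 + θ ∫₀^∞ e^{θt} S(x+t)/S(x) dt`. Since `(log S)' = -r`, the increment
`log S(x+t) - log S(x)` is antitone in `x` when `r` is nondecreasing and monotone when `r` is
nonincreasing; hence so is `S(x+t)/S(x)` for every `t ≥ 0`, and so is `f`.
-/

open MeasureTheory Set Filter Topology

section

variable {E : Type*} [NormedAddCommGroup E]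

theorem integral_Ioi_comp_const_add [NormedSpace ℝ E] (g : ℝ → E) (a : ℝ) :
    ∫ t in Ioi 0, g (a + t) = ∫ y in Ioi a, g y := by
  have h := (measurePreserving_add_left volume a).setIntegral_preimage_emb
    (measurableEmbedding_addLeft a) g (Ioi a)
  rwa [preimage_const_add_Ioi, sub_self] at h

theorem integrableOn_Ioi_comp_const_add_iff {g : ℝ → E} {a : ℝ} :
    IntegrableOn (fun t => g (a + t)) (Ioi 0) ↔ IntegrableOn g (Ioi a) := by
  have h := (measurePreserving_add_left volume a).integrableOn_comp_preimage
    (measurableEmbedding_addLeft a) (f := g) (s := Ioi a)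
  rwa [preimage_const_add_Ioi, sub_self] at h

theorem tendsto_setIntegral_Ioi_atTop [NormedSpace ℝ E] {f : ℝ → E} {a : ℝ}
    (hf : IntegrableOn f (Ioi a)) :
    Tendsto (fun x => ∫ y in Ioi x, f y) atTop (𝓝 0) := by
  have h := tendsto_setIntegral_of_antitone (fun _ => measurableSet_Ioi)
    (fun _ _ hxy => Ioi_subset_Ioi hxy) ⟨a, hf⟩
  have hempty : (⋂ x : ℝ, Ioi x) = ∅ :=
    eq_empty_of_forall_notMem fun y hy => lt_irrefl y (mem_iInter.1 hy y)
  rwa [hempty, Measure.restrict_empty, integral_zero_measure] at h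

end

theorem HasDerivAt.nonneg_of_monotoneOn_Ici {g : ℝ → ℝ} {g' a x : ℝ}
    (hg : HasDerivAt g g' x) (hmono : MonotoneOn g (Ici a)) (hx : a ≤ x) : 0 ≤ g' := by
  refine hg.hasDerivWithinAt.nonneg_of_monotoneOn ?_ hmono
  refine accPt_principal_iff_nhdsWithin.2 ((inferInstance : (𝓝[>] x).NeBot).mono ?_)
  exact nhdsWithin_mono x fun y (hy : x < y) => ⟨hx.trans hy.le, hy.ne'⟩

theorem monotoneOn_increment_of_monotoneOn_deriv {φ φ' : ℝ → ℝ} {a t : ℝ}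
    (hφ : ∀ x ∈ Ici a, HasDerivAt φ (φ' x) x) (hφ' : MonotoneOn φ' (Ici a)) (ht : 0 ≤ t) :
    MonotoneOn (fun x => φ (x + t) - φ x) (Ici a) := by
  have hshift : ∀ x ∈ Ici a, x + t ∈ Ici a := fun x hx => le_add_of_le_of_nonneg hx ht
  have hderiv : ∀ x ∈ Ici a, HasDerivAt (fun x => φ (x + t) - φ x) (φ' (x + t) - φ' x) x :=
    fun x hx => ((hφ (x + t) (hshift x hx)).comp_add_const x t).sub (hφ x hx)
  refine monotoneOn_of_hasDerivWithinAt_nonneg (convex_Ici a)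
    (fun x hx => (hderiv x hx).continuousAt.continuousWithinAt)
    (fun x hx => (hderiv x (interior_subset hx)).hasDerivWithinAt) fun x hx => ?_
  have hx : x ∈ Ici a := interior_subset hx
  exact sub_nonneg.2 (hφ' hx (hshift x hx) (le_add_of_nonneg_right ht))

noncomputable def expTailRatio (p θ : ℝ) (G G' : ℝ → ℝ) (x : ℝ) : ℝ :=
  (∫ y in Ioi x, Real.exp (θ * y) * G' y) / (Real.exp (θ * x) * (p - G x))

section Survival

variable {p θ : ℝ} {G G' : ℝ → ℝ}

theorem hasDerivAt_log_survival {y : ℝ} (hG : HasDerivAt G (G' y) y) (hy : G y < p) :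
    HasDerivAt (fun y => Real.log (p - G y)) (-(G' y / (p - G y))) y := by
  simpa only [neg_div] using (hG.const_sub p).log (sub_pos.2 hy).ne'

theorem survival_div_eq_exp_log_sub {x y : ℝ} (hx : G x < p) (hy : G y < p) :
    (p - G y) / (p - G x) = Real.exp (Real.log (p - G y) - Real.log (p - G x)) := by
  rw [Real.exp_sub, Real.exp_log (sub_pos.2 hy), Real.exp_log (sub_pos.2 hx)]

theorem antitoneOn_survival_div_of_monotoneOn_hazard
    (hderiv : ∀ x ∈ Ici (0 : ℝ), HasDerivAt G (G' x) x) (hGlt : ∀ x ∈ Ici (0 : ℝ), G x < p)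
    (hr : MonotoneOn (fun x => G' x / (p - G x)) (Ici 0)) {t : ℝ} (ht : 0 ≤ t) :
    AntitoneOn (fun x => (p - G (x + t)) / (p - G x)) (Ici 0) := by
  have hinc :=
    monotoneOn_increment_of_monotoneOn_deriv (φ := fun y => -Real.log (p - G y))
    (fun x hx => (hasDerivAt_log_survival (hderiv x hx) (hGlt x hx)).neg) (by simpa using hr) ht
  intro x hx y hy hxy
  have hxt : x + t ∈ Ici 0 := le_add_of_le_of_nonneg hx ht
  have hyt : y + t ∈ Ici 0 := le_add_of_le_of_nonneg hy ht
  simp only [survival_div_eq_exp_log_sub (hGlt _ hx) (hGlt _ hxt),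
    survival_div_eq_exp_log_sub (hGlt _ hy) (hGlt _ hyt), Real.exp_le_exp]
  linarith [hinc hx hy hxy]

theorem monotoneOn_survival_div_of_antitoneOn_hazard
    (hderiv : ∀ x ∈ Ici (0 : ℝ), HasDerivAt G (G' x) x) (hGlt : ∀ x ∈ Ici (0 : ℝ), G x < p)
    (hr : AntitoneOn (fun x => G' x / (p - G x)) (Ici 0)) {t : ℝ} (ht : 0 ≤ t) :
    MonotoneOn (fun x => (p - G (x + t)) / (p - G x)) (Ici 0) := by
  have hinc :=
    monotoneOn_increment_of_monotoneOn_deriv (φ := fun y => Real.log (p - G y))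
    (fun x hx => hasDerivAt_log_survival (hderiv x hx) (hGlt x hx)) hr.neg ht
  intro x hx y hy hxy
  have hxt : x + t ∈ Ici 0 := le_add_of_le_of_nonneg hx ht
  have hyt : y + t ∈ Ici 0 := le_add_of_le_of_nonneg hy ht
  simp only [survival_div_eq_exp_log_sub (hGlt _ hx) (hGlt _ hxt),
    survival_div_eq_exp_log_sub (hGlt _ hy) (hGlt _ hyt), Real.exp_le_exp]
  exact hinc hx hy hxy

theorem exp_mul_survival_le_integral_Ioi (hθ : 0 ≤ θ)
    (hderiv : ∀ x ∈ Ici (0 : ℝ), HasDerivAt G (G' x) x) (hmono : MonotoneOn G (Ici 0))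
    (hGlim : Tendsto G atTop (𝓝 p))
    (hint : IntegrableOn (fun y => Real.exp (θ * y) * G' y) (Ici 0)) {x : ℝ} (hx : 0 ≤ x) :
    Real.exp (θ * x) * (p - G x) ≤ ∫ y in Ioi x, Real.exp (θ * y) * G' y := by
  have hderiv' : ∀ y ∈ Ici x, HasDerivAt G (G' y) y := fun y hy => hderiv y (hx.trans hy)
  have hG' : ∀ y ∈ Ioi x, 0 ≤ G' y := fun y (hy : x < y) =>
    (hderiv' y hy.le).nonneg_of_monotoneOn_Ici hmono (hx.trans hy.le)
  calc Real.exp (θ * x) * (p - G x) = Real.exp (θ * x) * ∫ y in Ioi x, G' y := by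
        rw [integral_Ioi_of_hasDerivAt_of_nonneg' hderiv' hG' hGlim]
    _ = ∫ y in Ioi x, Real.exp (θ * x) * G' y := (integral_const_mul _ _).symm
    _ ≤ ∫ y in Ioi x, Real.exp (θ * y) * G' y :=
        setIntegral_mono_on ((integrableOn_Ioi_deriv_of_nonneg' hderiv' hG' hGlim).const_mul _)
          (hint.mono_set (Ioi_subset_Ici hx)) measurableSet_Ioi fun y hy =>
          mul_le_mul_of_nonneg_right (Real.exp_le_exp.2 (by nlinarith [mem_Ioi.1 hy])) (hG' y hy)

theorem tendsto_exp_mul_survival_atTop (hθ : 0 ≤ θ)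
    (hderiv : ∀ x ∈ Ici (0 : ℝ), HasDerivAt G (G' x) x) (hmono : MonotoneOn G (Ici 0))
    (hGlt : ∀ x ∈ Ici (0 : ℝ), G x < p) (hGlim : Tendsto G atTop (𝓝 p))
    (hint : IntegrableOn (fun y => Real.exp (θ * y) * G' y) (Ici 0)) :
    Tendsto (fun y => Real.exp (θ * y) * (p - G y)) atTop (𝓝 0) :=
  squeeze_zero' (eventually_atTop.2 ⟨0, fun y hy => by
      have hS := sub_pos.2 (hGlt y hy); positivity⟩)
    (eventually_atTop.2 ⟨0, fun _ hy =>
      exp_mul_survival_le_integral_Ioi hθ hderiv hmono hGlim hint hy⟩)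
    (tendsto_setIntegral_Ioi_atTop (hint.mono_set Ioi_subset_Ici_self))

theorem integrableOn_and_integral_Ioi_exp_mul_deriv (hθ : 0 < θ)
    (hderiv : ∀ x ∈ Ici (0 : ℝ), HasDerivAt G (G' x) x) (hG'cont : ContinuousOn G' (Ici 0))
    (hmono : MonotoneOn G (Ici 0)) (hGlt : ∀ x ∈ Ici (0 : ℝ), G x < p)
    (hGlim : Tendsto G atTop (𝓝 p))
    (hint : IntegrableOn (fun y => Real.exp (θ * y) * G' y) (Ici 0)) {x : ℝ} (hx : 0 ≤ x) :
    IntegrableOn (fun y => Real.exp (θ * y) * (p - G y)) (Ioi x) ∧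
      ∫ y in Ioi x, Real.exp (θ * y) * G' y =
        Real.exp (θ * x) * (p - G x) + θ * ∫ y in Ioi x, Real.exp (θ * y) * (p - G y) := by
  set g := fun y => Real.exp (θ * y) * (p - G y)
  set f := fun y => Real.exp (θ * y) * G' y
  -- `H' = θ g` is nonnegative, so the improper-integral FTC applies without knowing integrability
  set H := fun y => g y + ∫ z in x..y, f z
  have hf : ContinuousOn f (Ici 0) :=
    (by fun_prop : Continuous fun y => Real.exp (θ * y)).continuousOn.mul hG'cont
  have hfint : ∀ y ∈ Ici (0 : ℝ), IntervalIntegrable f volume x y := fun y hy =>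
    (hf.mono ((ordConnected_Ici).uIcc_subset hx hy)).intervalIntegrable
  have hg : ∀ y ∈ Ici (0 : ℝ), HasDerivAt g (θ * g y - f y) y := fun y hy => by
    refine ((((hasDerivAt_id y).const_mul θ).exp).mul ((hderiv y hy).const_sub p)).congr_deriv ?_
    simp only [g, f, id]; ring
  have hH : ∀ y ∈ Ioi x, HasDerivAt H (θ * g y) y := fun y hy => by
    have hy0 : y ∈ Ioi 0 := lt_of_le_of_lt hx hy
    have hy0' : y ∈ Ici 0 := mem_Ici_of_Ioi hy0
    refine ((hg y hy0').add (intervalIntegral.integral_hasDerivAt_right (hfint y hy0')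
      ((hf.mono Ioi_subset_Ici_self).stronglyMeasurableAtFilter isOpen_Ioi y hy0)
      (hf.continuousAt (Ici_mem_nhds hy0)))).congr_deriv (sub_add_cancel _ _)
  have hHcont : ContinuousWithinAt H (Ici x) x := by
    refine (hg x hx).continuousAt.continuousWithinAt.add ?_
    refine (continuousWithinAt_Icc_iff_Ici (lt_add_one x)).1 ?_
    refine intervalIntegral.continuousWithinAt_primitive Real.volume_singleton ?_
    simpa using hfint (x + 1) (by simp only [mem_Ici]; linarith)
  have hHnonneg : ∀ y ∈ Ioi x, 0 ≤ θ * g y := fun y hy => by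
    have hS := sub_pos.2 (hGlt y (hx.trans hy.le)); simp only [g]; positivity
  have hHlim : Tendsto H atTop (𝓝 (0 + ∫ y in Ioi x, f y)) :=
    (tendsto_exp_mul_survival_atTop hθ.le hderiv hmono hGlt hGlim hint).add
      (intervalIntegral_tendsto_integral_Ioi x (hint.mono_set (Ioi_subset_Ici hx)) tendsto_id)
  constructor
  · exact (integrable_const_mul_iff (isUnit_iff_ne_zero.2 hθ.ne') g).1
      (integrableOn_Ioi_deriv_of_nonneg hHcont hH hHnonneg hHlim)
  · have h := integral_Ioi_of_hasDerivAt_of_nonneg hHcont hH hHnonneg hHlim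
    rw [integral_const_mul] at h
    simp only [H, intervalIntegral.integral_same] at h
    linarith

theorem exp_mul_survival_div_eq {x t : ℝ} (hx : G x < p) :
    Real.exp (θ * t) * ((p - G (x + t)) / (p - G x)) =
      (Real.exp (θ * x) * (p - G x))⁻¹ * (Real.exp (θ * (x + t)) * (p - G (x + t))) := by
  have hS : p - G x ≠ 0 := (sub_pos.2 hx).ne'
  rw [mul_add, Real.exp_add]
  field_simp

theorem integrableOn_exp_mul_survival_div (hθ : 0 < θ)
    (hderiv : ∀ x ∈ Ici (0 : ℝ), HasDerivAt G (G' x) x) (hG'cont : ContinuousOn G' (Ici 0))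
    (hmono : MonotoneOn G (Ici 0)) (hGlt : ∀ x ∈ Ici (0 : ℝ), G x < p)
    (hGlim : Tendsto G atTop (𝓝 p))
    (hint : IntegrableOn (fun y => Real.exp (θ * y) * G' y) (Ici 0)) {x : ℝ} (hx : 0 ≤ x) :
    IntegrableOn (fun t => Real.exp (θ * t) * ((p - G (x + t)) / (p - G x))) (Ioi 0) := by
  simp only [exp_mul_survival_div_eq (hGlt x hx)]
  exact (integrableOn_Ioi_comp_const_add_iff.2 (integrableOn_and_integral_Ioi_exp_mul_deriv
    hθ hderiv hG'cont hmono hGlt hGlim hint hx).1).const_mul _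

theorem expTailRatio_eq (hθ : 0 < θ)
    (hderiv : ∀ x ∈ Ici (0 : ℝ), HasDerivAt G (G' x) x) (hG'cont : ContinuousOn G' (Ici 0))
    (hmono : MonotoneOn G (Ici 0)) (hGlt : ∀ x ∈ Ici (0 : ℝ), G x < p)
    (hGlim : Tendsto G atTop (𝓝 p))
    (hint : IntegrableOn (fun y => Real.exp (θ * y) * G' y) (Ici 0)) {x : ℝ} (hx : 0 ≤ x) :
    expTailRatio p θ G G' x =
      1 + θ * ∫ t in Ioi 0, Real.exp (θ * t) * ((p - G (x + t)) / (p - G x)) := by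
  have hS : p - G x ≠ 0 := (sub_pos.2 (hGlt x hx)).ne'
  simp only [exp_mul_survival_div_eq (hGlt x hx), integral_const_mul,
    integral_Ioi_comp_const_add (fun y => Real.exp (θ * y) * (p - G y)), expTailRatio,
    (integrableOn_and_integral_Ioi_exp_mul_deriv hθ hderiv hG'cont hmono hGlt hGlim hint hx).2]
  field_simp

theorem expTailRatio_le_of_survival_div_le (hθ : 0 < θ)
    (hderiv : ∀ x ∈ Ici (0 : ℝ), HasDerivAt G (G' x) x) (hG'cont : ContinuousOn G' (Ici 0))
    (hmono : MonotoneOn G (Ici 0)) (hGlt : ∀ x ∈ Ici (0 : ℝ), G x < p)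
    (hGlim : Tendsto G atTop (𝓝 p))
    (hint : IntegrableOn (fun y => Real.exp (θ * y) * G' y) (Ici 0)) {a b : ℝ} (ha : 0 ≤ a)
    (hb : 0 ≤ b)
    (h : ∀ t ∈ Ioi (0 : ℝ), (p - G (a + t)) / (p - G a) ≤ (p - G (b + t)) / (p - G b)) :
    expTailRatio p θ G G' a ≤ expTailRatio p θ G G' b := by
  rw [expTailRatio_eq hθ hderiv hG'cont hmono hGlt hGlim hint ha,
    expTailRatio_eq hθ hderiv hG'cont hmono hGlt hGlim hint hb]
  gcongr 1 + θ * ?_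
  exact setIntegral_mono_on
    (integrableOn_exp_mul_survival_div hθ hderiv hG'cont hmono hGlt hGlim hint ha)
    (integrableOn_exp_mul_survival_div hθ hderiv hG'cont hmono hGlt hGlim hint hb)
    measurableSet_Ioi fun t ht => mul_le_mul_of_nonneg_left (h t ht) (Real.exp_pos _).le

end Survival

theorem ifr_dfr_monotonicity_of_ratio_general
    (p θ : ℝ) (hθ : 0 < θ)
    (G G' : ℝ → ℝ)
    (hderiv : ∀ x ∈ Set.Ici (0 : ℝ), HasDerivAt G (G' x) x)
    (hG'cont : ContinuousOn G' (Set.Ici 0))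
    (hmono : MonotoneOn G (Set.Ici 0))
    (hGlt : ∀ x ∈ Set.Ici (0 : ℝ), G x < p)
    (hGlim : Filter.Tendsto G Filter.atTop (nhds p))
    (hint : IntegrableOn (fun y => Real.exp (θ * y) * G' y) (Set.Ici 0)) :
    (MonotoneOn (fun x => G' x / (p - G x)) (Set.Ici 0) →
      AntitoneOn (fun x =>
        (∫ y in Set.Ioi x, Real.exp (θ * y) * G' y) / (Real.exp (θ * x) * (p - G x)))
        (Set.Ici 0) ∧
      ∀ x ∈ Set.Ici (0 : ℝ),
        (∫ y in Set.Ioi x, Real.exp (θ * y) * G' y) / (Real.exp (θ * x) * (p - G x))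
          ≤ (∫ y in Set.Ioi (0 : ℝ), Real.exp (θ * y) * G' y)
              / (Real.exp (θ * 0) * (p - G 0))) ∧
    (AntitoneOn (fun x => G' x / (p - G x)) (Set.Ici 0) →
      MonotoneOn (fun x =>
        (∫ y in Set.Ioi x, Real.exp (θ * y) * G' y) / (Real.exp (θ * x) * (p - G x)))
        (Set.Ici 0) ∧
      ∀ x ∈ Set.Ici (0 : ℝ),
        (∫ y in Set.Ioi (0 : ℝ), Real.exp (θ * y) * G' y) / (Real.exp (θ * 0) * (p - G 0))
          ≤ (∫ y in Set.Ioi x, Real.exp (θ * y) * G' y) / (Real.exp (θ * x) * (p - G x))) := by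
  have hcmp :=
    @expTailRatio_le_of_survival_div_le p θ G G' hθ hderiv hG'cont hmono hGlt hGlim hint
  refine ⟨fun hr => ?_, fun hr => ?_⟩
  · have hf : AntitoneOn (expTailRatio p θ G G') (Ici 0) := fun a ha b hb hab =>
      hcmp hb ha fun t ht => antitoneOn_survival_div_of_monotoneOn_hazard hderiv hGlt hr
        (le_of_lt ht) ha hb hab
    exact ⟨hf, fun x hx => hf self_mem_Ici hx hx⟩
  · have hf : MonotoneOn (expTailRatio p θ G G') (Ici 0) := fun a ha b hb hab =>
      hcmp ha hb fun t ht => monotoneOn_survival_div_of_antitoneOn_hazard hderiv hGlt hr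
        (le_of_lt ht) ha hb hab
    exact ⟨hf, fun x hx => hf self_mem_Ici hx hx⟩

/-- If the failure rate `r(x) = G′(x)/(p − G(x))` is nondecreasing on `[0,∞)` then the ratio
`f(x) = (∫ₓ^∞ e^{θy} G′(y) dy)/(e^{θx}(p − G(x)))` is nonincreasing on `[0,∞)`, and hence
`f(x) ≤ f(0)` for all `x ≥ 0`; if `r` is nonincreasing then `f` is nondecreasing and
`f(0) ≤ f(x)` for all `x ≥ 0`. -/
theorem ifr_dfr_monotonicity_of_ratio
    (p θ : ℝ) (hp : 0 < p) (hθ : 0 < θ)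
    (G G' : ℝ → ℝ)
    (hderiv : ∀ x ∈ Set.Ici (0 : ℝ), HasDerivAt G (G' x) x)
    (hG'cont : ContinuousOn G' (Set.Ici 0))
    (hmono : MonotoneOn G (Set.Ici 0))
    (hG0 : G 0 = 0)
    (hGlt : ∀ x ∈ Set.Ici (0 : ℝ), G x < p)
    (hGlim : Filter.Tendsto G Filter.atTop (nhds p))
    (hint : IntegrableOn (fun y => Real.exp (θ * y) * G' y) (Set.Ici 0)) :
    (MonotoneOn (fun x => G' x / (p - G x)) (Set.Ici 0) →
      AntitoneOn (fun x =>
        (∫ y in Set.Ioi x, Real.exp (θ * y) * G' y) / (Real.exp (θ * x) * (p - G x)))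
        (Set.Ici 0) ∧
      ∀ x ∈ Set.Ici (0 : ℝ),
        (∫ y in Set.Ioi x, Real.exp (θ * y) * G' y) / (Real.exp (θ * x) * (p - G x))
          ≤ (∫ y in Set.Ioi (0 : ℝ), Real.exp (θ * y) * G' y)
              / (Real.exp (θ * 0) * (p - G 0))) ∧
    (AntitoneOn (fun x => G' x / (p - G x)) (Set.Ici 0) →
      MonotoneOn (fun x =>
        (∫ y in Set.Ioi x, Real.exp (θ * y) * G' y) / (Real.exp (θ * x) * (p - G x)))
        (Set.Ici 0) ∧
      ∀ x ∈ Set.Ici (0 : ℝ),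
        (∫ y in Set.Ioi (0 : ℝ), Real.exp (θ * y) * G' y) / (Real.exp (θ * 0) * (p - G 0))
          ≤ (∫ y in Set.Ioi x, Real.exp (θ * y) * G' y) / (Real.exp (θ * x) * (p - G x))) :=
  ifr_dfr_monotonicity_of_ratio_general p θ hθ G G' hderiv hG'cont hmono hGlt hGlim hint
end
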